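/- arXiv:2203.04380 — 2 statements merged into one kernel-verified Lean document; each statement's English description precedes it below -/
import Mathlib

section
/- Let λ be the unique positive real number satisfying 2·e^λ·(1−λ) = 2−λ. Then both first-moment integrals vanish at the point (2λ, λ): ∫_P x₁·e^{−(2λx₁+λx₂)} d(x₁,x₂) = 0 and ∫_P x₂·e^{−(2λx₁+λx₂)} d(x₁,x₂) = 0. That is, (2λ, λ) is a critical point of the function v ↦ ∫_P e^{−⟨v,x⟩} dx on the set where it is finite. -/
/-!
The lattice automorphism `σ (x₁, x₂) = (x₁ + x₂, -x₂)` maps `P` onto itself, preserves Lebesgue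
measure and the weight `2x₁ + x₂`, and negates `x₂`; hence the second moment vanishes for every `λ`.
For the first moment, `P` is the half-strip `[-1, ∞) × [-1, 1]` minus the triangle
`{x₁ + x₂ < -1}`, and on both pieces the separated weight `x₁ e^{-2λx₁} · e^{-λx₂}` integrates by
Fubini to elementary one-variable integrals. The result is `e^λ (2e^λ(1-λ) - (2-λ)) / (2λ³)`,
which vanishes exactly by the equation defining `λ`.
-/

open MeasureTheory

/-- The moment polytope `P_{-K_M}` of the blowup of `ℂ×ℙ¹` at a torus-fixed point:
`P = {(x₁,x₂) ∈ ℝ² : x₁ ≥ −1, −1 ≤ x₂ ≤ 1, x₁ + x₂ ≥ −1}`. -/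
def momentPolytope : Set (ℝ × ℝ) :=
  {p | -1 ≤ p.1 ∧ -1 ≤ p.2 ∧ p.2 ≤ 1 ∧ -1 ≤ p.1 + p.2}

open Real Set Filter Topology Asymptotics

lemma hasDerivAt_mul_exp_mul {c : ℝ} (hc : c ≠ 0) (x : ℝ) :
    HasDerivAt (fun x => (x / c - 1 / c ^ 2) * exp (c * x)) (x * exp (c * x)) x := by
  refine ((((hasDerivAt_id' x).div_const c).sub_const (1 / c ^ 2)).fun_mul
    ((hasDerivAt_id' x).const_mul c).exp).congr_deriv ?_
  field_simp
  ring

lemma integral_exp_mul_of_ne_zero {c : ℝ} (hc : c ≠ 0) (a b : ℝ) :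
    ∫ x in a..b, exp (c * x) = (exp (c * b) - exp (c * a)) / c := by
  rw [intervalIntegral.integral_comp_mul_left (fun x => exp x) hc, integral_exp, smul_eq_mul,
    inv_mul_eq_div]

lemma integral_mul_exp_mul_of_ne_zero {c : ℝ} (hc : c ≠ 0) (a b : ℝ) :
    ∫ x in a..b, x * exp (c * x) =
      (b / c - 1 / c ^ 2) * exp (c * b) - (a / c - 1 / c ^ 2) * exp (c * a) :=
  intervalIntegral.integral_eq_sub_of_hasDerivAt (fun x _ => hasDerivAt_mul_exp_mul hc x)
    ((by fun_prop : Continuous fun x => x * exp (c * x)).intervalIntegrable _ _)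

lemma tendsto_mul_exp_mul_atTop {c : ℝ} (hc : c < 0) :
    Tendsto (fun x => x * exp (c * x)) atTop (𝓝 0) := by
  simpa using tendsto_rpow_mul_exp_neg_mul_atTop_nhds_zero 1 (-c) (neg_pos.2 hc)

lemma integrableOn_mul_exp_mul_Ioi {c : ℝ} (hc : c < 0) (a : ℝ) :
    IntegrableOn (fun x => x * exp (c * x)) (Ioi a) := by
  refine integrable_of_isBigO_exp_neg (b := -(c / 2)) (by linarith) (by fun_prop) ?_
  have h := ((tendsto_mul_exp_mul_atTop (c := c / 2) (by linarith)).isBigO_one ℝ).mul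
    (isBigO_refl (fun x => exp (c / 2 * x)) atTop)
  refine (h.congr (fun x => ?_) (fun x => ?_))
  · rw [mul_assoc, ← exp_add]; ring_nf
  · rw [one_mul]; ring_nf

lemma integral_mul_exp_mul_Ioi {c : ℝ} (hc : c < 0) (a : ℝ) :
    ∫ x in Ioi a, x * exp (c * x) = (1 / c ^ 2 - a / c) * exp (c * a) := by
  have htend : Tendsto (fun x => (x / c - 1 / c ^ 2) * exp (c * x)) atTop (𝓝 0) := by
    have := ((tendsto_mul_exp_mul_atTop hc).div_const c).sub
      ((tendsto_exp_atBot.comp (tendsto_id.const_mul_atTop_of_neg hc)).const_mul (1 / c ^ 2))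
    simp only [zero_div, mul_zero, sub_zero] at this
    exact this.congr fun x => by simp only [Function.comp_apply, id]; ring
  rw [integral_Ioi_of_hasDerivAt_of_tendsto' (fun x _ => hasDerivAt_mul_exp_mul hc.ne x)
    (integrableOn_mul_exp_mul_Ioi hc a) htend]
  ring

lemma setIntegral_setOf_fst_mem_snd_mem {α β E : Type*} [MeasurableSpace α] [MeasurableSpace β]
    [NormedAddCommGroup E] [NormedSpace ℝ E] {μ : Measure α} {ν : Measure β}
    [SFinite μ] [SFinite ν]
    {s : Set α} {t : α → Set β} {f : α × β → E} (hs : MeasurableSet s)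
    (hst : MeasurableSet {p : α × β | p.1 ∈ s ∧ p.2 ∈ t p.1})
    (hf : IntegrableOn f {p : α × β | p.1 ∈ s ∧ p.2 ∈ t p.1} (μ.prod ν)) :
    ∫ p in {p : α × β | p.1 ∈ s ∧ p.2 ∈ t p.1}, f p ∂μ.prod ν =
      ∫ x in s, ∫ y in t x, f (x, y) ∂ν ∂μ := by
  rw [← integral_indicator hst, integral_prod _ ((integrable_indicator_iff hst).2 hf),
    ← integral_indicator hs]
  congr 1
  funext x
  by_cases hx : x ∈ s
  · have ht : MeasurableSet (t x) := by
      simpa [hx] using measurable_prodMk_left (x := x) hst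
    rw [indicator_of_mem hx, ← integral_indicator ht]
    congr 1
    funext y
    by_cases hy : y ∈ t x <;> simp [indicator, hx, hy]
  · simp [indicator, hx]

lemma measurableSet_momentPolytope : MeasurableSet momentPolytope := by
  unfold momentPolytope
  measurability

lemma prod_diff_momentPolytope :
    Ici (-1 : ℝ) ×ˢ Icc (-1 : ℝ) 1 \ momentPolytope =
      {p : ℝ × ℝ | p.1 ∈ Icc (-1) 0 ∧ p.2 ∈ Ico (-1) (-1 - p.1)} := by
  ext ⟨x, y⟩
  simp only [momentPolytope, Set.mem_sdiff, mem_prod, mem_Ici, mem_Icc, mem_Ico, mem_ofPred_eq]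
  constructor
  · rintro ⟨⟨hx, hy, hy'⟩, hP⟩
    have : x + y < -1 := by by_contra h; exact hP ⟨hx, hy, hy', not_lt.1 h⟩
    exact ⟨⟨hx, by linarith⟩, hy, by linarith⟩
  · rintro ⟨⟨hx, hx'⟩, hy, hy'⟩
    exact ⟨⟨hx, hy, by linarith⟩, fun h => by linarith [h.2.2.2]⟩

lemma setIntegral_momentPolytope_mul {g h : ℝ → ℝ} (hg : IntegrableOn g (Ioi (-1)))
    (hh : IntegrableOn h (Icc (-1) 1)) :
    ∫ p in momentPolytope, g p.1 * h p.2 =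
      (∫ x in Ioi (-1), g x) * (∫ y in (-1)..1, h y) -
        ∫ x in (-1)..0, g x * ∫ y in (-1)..(-1 - x), h y := by
  set Q := Ici (-1 : ℝ) ×ˢ Icc (-1 : ℝ) 1
  have hQ : IntegrableOn (fun p : ℝ × ℝ => g p.1 * h p.2) Q := by
    rw [IntegrableOn, Measure.volume_eq_prod, ← Measure.prod_restrict]
    exact (Iff.mpr integrableOn_Ici_iff_integrableOn_Ioi hg).mul_prod hh
  have hPQ : momentPolytope ⊆ Q := fun p hp => ⟨hp.1, hp.2.1, hp.2.2.1⟩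
  have hprod : ∫ p in Q, g p.1 * h p.2 = (∫ x in Ioi (-1), g x) * ∫ y in (-1)..1, h y := by
    rw [Measure.volume_eq_prod, setIntegral_prod_mul, integral_Ici_eq_integral_Ioi,
      intervalIntegral.integral_of_le (by norm_num), integral_Icc_eq_integral_Ioc]
  have htri : ∫ p in Q \ momentPolytope, g p.1 * h p.2 =
      ∫ x in (-1)..0, g x * ∫ y in (-1)..(-1 - x), h y := by
    have hT : MeasurableSet (Q \ momentPolytope) :=
      (measurableSet_Ici.prod measurableSet_Icc).diff measurableSet_momentPolytope
    have hTi := hQ.mono_set (sdiff_subset (t := momentPolytope))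
    rw [prod_diff_momentPolytope] at hT hTi ⊢
    rw [Measure.volume_eq_prod] at hTi ⊢
    rw [setIntegral_setOf_fst_mem_snd_mem (t := fun x => Ico (-1) (-1 - x))
        measurableSet_Icc hT hTi,
      intervalIntegral.integral_of_le (by norm_num), ← integral_Icc_eq_integral_Ioc]
    refine setIntegral_congr_fun measurableSet_Icc fun x hx => ?_
    rw [intervalIntegral.integral_of_le (by linarith [hx.2]), ← integral_Ico_eq_integral_Ioc,
      ← integral_const_mul]
  rw [← hprod, ← htri, setIntegral_sdiff measurableSet_momentPolytope hQ hPQ, sub_sub_cancel]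

def momentPolytopeInvolution (p : ℝ × ℝ) : ℝ × ℝ := (p.1 + p.2, -p.2)

lemma involutive_momentPolytopeInvolution : Function.Involutive momentPolytopeInvolution :=
  fun p => by simp [momentPolytopeInvolution]

lemma measurePreserving_momentPolytopeInvolution :
    MeasurePreserving momentPolytopeInvolution := by
  rw [Measure.volume_eq_prod]
  exact ((MeasurePreserving.id volume).prod (Measure.measurePreserving_neg volume)).comp
    (measurePreserving_add_prod volume volume)

lemma preimage_momentPolytopeInvolution :
    momentPolytopeInvolution ⁻¹' momentPolytope = momentPolytope := by
  ext p
  simp only [momentPolytopeInvolution, momentPolytope, mem_preimage, mem_ofPred_eq]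
  constructor <;> rintro ⟨h₁, h₂, h₃, h₄⟩ <;> refine ⟨?_, ?_, ?_, ?_⟩ <;> linarith

lemma setIntegral_momentPolytope_comp_involution {E : Type*} [NormedAddCommGroup E]
    [NormedSpace ℝ E] (f : ℝ × ℝ → E) :
    ∫ p in momentPolytope, f (momentPolytopeInvolution p) = ∫ p in momentPolytope, f p := by
  have hemb : MeasurableEmbedding momentPolytopeInvolution :=
    (MeasurableEquiv.ofInvolutive _ involutive_momentPolytopeInvolution
      measurePreserving_momentPolytopeInvolution.measurable).measurableEmbedding
  simpa only [preimage_momentPolytopeInvolution] using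
    measurePreserving_momentPolytopeInvolution.setIntegral_preimage_emb hemb f momentPolytope

lemma integral_snd_mul_comp_momentPolytope (φ : ℝ → ℝ) :
    ∫ p in momentPolytope, p.2 * φ (2 * p.1 + p.2) = 0 := by
  have h := setIntegral_momentPolytope_comp_involution fun p => p.2 * φ (2 * p.1 + p.2)
  simp only [momentPolytopeInvolution, neg_mul, integral_neg] at h
  ring_nf at h ⊢
  linarith

lemma integral_fst_mul_exp_momentPolytope {l : ℝ} (hl : 0 < l) :
    ∫ p in momentPolytope, p.1 * exp (-(2 * l * p.1 + l * p.2)) =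
      exp l * (2 * exp l * (1 - l) - (2 - l)) / (2 * l ^ 3) := by
  have hl' : -l ≠ 0 := by linarith
  have hsep : ∀ p : ℝ × ℝ, p.1 * exp (-(2 * l * p.1 + l * p.2)) =
      p.1 * exp (-(2 * l) * p.1) * exp (-l * p.2) := fun p => by
    rw [mul_assoc p.1, ← exp_add]; ring_nf
  have htri : ∫ x in (-1)..0, x * exp (-(2 * l) * x) * ∫ y in (-1)..(-1 - x), exp (-l * y) =
      exp l / l *
        ((∫ x in (-1)..0, x * exp (-(2 * l) * x)) - ∫ x in (-1)..0, x * exp (-l * x)) := by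
    rw [← intervalIntegral.integral_sub (Continuous.intervalIntegrable (by fun_prop) _ _)
      (Continuous.intervalIntegrable (by fun_prop) _ _),
      ← intervalIntegral.integral_const_mul]
    refine intervalIntegral.integral_congr fun x _ => ?_
    simp only [integral_exp_mul_of_ne_zero hl']
    rw [show -l * (-1 - x) = l + l * x by ring, show -l * -1 = l by ring, exp_add,
      show -(2 * l) * x = -(l * x) + -(l * x) by ring, exp_add, neg_mul, exp_neg]
    field_simp
    ring
  simp_rw [hsep]
  rw [setIntegral_momentPolytope_mul (integrableOn_mul_exp_mul_Ioi (by linarith) _)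
      (by fun_prop : Continuous fun y => exp (-l * y)).integrableOn_Icc, htri,
    integral_mul_exp_mul_Ioi (by linarith), integral_exp_mul_of_ne_zero hl',
    integral_mul_exp_mul_of_ne_zero hl', integral_mul_exp_mul_of_ne_zero (by linarith)]
  have h2 : exp (l * 2) = exp l ^ 2 := by rw [← exp_nat_mul]; ring_nf
  ring_nf
  rw [exp_zero, h2, exp_neg]
  field_simp
  ring

/-- If `λ` is the unique positive real satisfying `2·e^λ·(1−λ) = 2−λ`, then both
first-moment integrals over `P` vanish at the point `(2λ, λ)`:
`∫_P x₁·e^{−(2λx₁+λx₂)} = 0` and `∫_P x₂·e^{−(2λx₁+λx₂)} = 0`. -/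
theorem stmt_5 (l : ℝ) (hpos : 0 < l)
    (heq : 2 * Real.exp l * (1 - l) = 2 - l) :
    (∫ p in momentPolytope, p.1 * Real.exp (-(2 * l * p.1 + l * p.2))) = 0 ∧
    (∫ p in momentPolytope, p.2 * Real.exp (-(2 * l * p.1 + l * p.2))) = 0 := by
  refine ⟨?_, ?_⟩
  · rw [integral_fst_mul_exp_momentPolytope hpos, heq, sub_self, mul_zero, zero_div]
  · simpa only [mul_add, ← mul_assoc, mul_comm l 2] using
      integral_snd_mul_comp_momentPolytope fun u => exp (-(l * u))
end

section
/- Let ν₁,…,ν_r ∈ ℝⁿ and c₁,…,c_r ∈ ℝ, let P = ⋂_{i=1}^{r} {x ∈ ℝⁿ : ⟨νᵢ, x⟩ ≥ cᵢ} and C = ⋂_{i=1}^{r} {x ∈ ℝⁿ : ⟨νᵢ, x⟩ ≥ 0}, and let v lie in the topological interior of the dual cone C^∨ = {y ∈ ℝⁿ : ⟨y, x⟩ ≥ 0 for all x ∈ C}. Then the function x ↦ e^{−⟨v, x⟩} is integrable on P with respect to Lebesgue measure on ℝⁿ. -/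
/-!
Since `v` is interior to the dual cone, tilting it by a small `δ` towards any `x ∈ C` keeps it
in the dual cone, so `⟪v, x⟫ ≥ δ ‖x‖` on `C`. Unit directions of points of `P` escaping to
infinity accumulate in `C`, so by compactness of the unit sphere `⟪v, x⟫ ≥ (δ / 2) ‖x‖ - M` on
`P`. Hence the integrand is dominated on `P` by `e^M e^{-(δ/2)‖x‖}`, which is integrable because
it decays faster than `(1 + ‖x‖)^{-(n+1)}`.
-/

open MeasureTheory
open scoped RealInnerProductSpace

open Filter Topology Metric Real

section Cone

variable {E : Type*} [NormedAddCommGroup E] [InnerProductSpace ℝ E]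

theorem exists_pos_mul_norm_le_inner_of_mem_interior_dual {C : Set E} {v : E}
    (hv : v ∈ interior {y : E | ∀ x ∈ C, 0 ≤ ⟪y, x⟫}) :
    ∃ δ > 0, ∀ x ∈ C, δ * ‖x‖ ≤ ⟪v, x⟫ := by
  obtain ⟨δ, hδ, hball⟩ := nhds_basis_closedBall.mem_iff.mp (mem_interior_iff_mem_nhds.mp hv)
  refine ⟨δ, hδ, fun x hx => ?_⟩
  rcases eq_or_ne x 0 with rfl | hx0
  · simp
  have hw : v - (δ / ‖x‖) • x ∈ closedBall v δ := by
    rw [mem_closedBall, dist_eq_norm, sub_sub_cancel_left, norm_neg, norm_smul, norm_div,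
      norm_norm, Real.norm_of_nonneg hδ.le, div_mul_cancel₀ _ (norm_ne_zero_iff.mpr hx0)]
  have := hball hw x hx
  rw [inner_sub_left, real_inner_smul_left, real_inner_self_eq_norm_sq] at this
  have hnorm : δ / ‖x‖ * ‖x‖ ^ 2 = δ * ‖x‖ := by field_simp
  linarith

end Cone

section Polyhedron

variable {E ι : Type*} [NormedAddCommGroup E] [InnerProductSpace ℝ E]

def polyhedron (ν : ι → E) (c : ι → ℝ) : Set E :=
  ⋂ i, {x | c i ≤ ⟪ν i, x⟫}

theorem isClosed_polyhedron (ν : ι → E) (c : ι → ℝ) : IsClosed (polyhedron ν c) :=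
  isClosed_iInter fun _ => isClosed_le continuous_const (continuous_const.inner continuous_id)

theorem mem_polyhedron_zero_of_tendsto_smul {ν : ι → E} {c : ι → ℝ} {α : Type*} {l : Filter α}
    [l.NeBot] {x : α → E} {t : α → ℝ} {y : E} (hx : ∀ k, x k ∈ polyhedron ν c)
    (ht0 : ∀ k, 0 ≤ t k) (ht : Tendsto t l (𝓝 0)) (hy : Tendsto (fun k => t k • x k) l (𝓝 y)) :
    y ∈ polyhedron ν 0 := by
  refine Set.mem_iInter.mpr fun i => ?_
  have hlower : Tendsto (fun k => t k * c i) l (𝓝 0) := by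
    simpa using ht.mul_const (c i)
  refine le_of_tendsto_of_tendsto hlower (tendsto_const_nhds.inner hy)
    (Eventually.of_forall fun k => ?_)
  simp only [real_inner_smul_right]
  exact mul_le_mul_of_nonneg_left (Set.mem_iInter.mp (hx k) i) (ht0 k)

variable [FiniteDimensional ℝ E]

theorem exists_mul_norm_sub_le_inner_on_polyhedron {ν : ι → E} (c : ι → ℝ) {v : E}
    {δ a : ℝ} (ha : a < δ) (hv : ∀ x ∈ polyhedron ν 0, δ * ‖x‖ ≤ ⟪v, x⟫) :
    ∃ M, ∀ x ∈ polyhedron ν c, a * ‖x‖ - M ≤ ⟪v, x⟫ := by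
  by_contra! hbad
  choose x hxP hxlt using fun k : ℕ => hbad k
  have hx0 : ∀ k, x k ≠ 0 := by
    rintro k hk
    have := hxlt k
    simp only [hk, norm_zero, mul_zero, inner_zero_right] at this
    linarith [(Nat.cast_nonneg k : (0 : ℝ) ≤ k)]
  set t : ℕ → ℝ := fun k => ‖x k‖⁻¹
  have ht0 : ∀ k, 0 ≤ t k := fun k => inv_nonneg.mpr (norm_nonneg _)
  have hsphere : ∀ k, t k • x k ∈ sphere (0 : E) 1 := fun k => by
    simp [t, norm_smul, inv_mul_cancel₀ (norm_ne_zero_iff.mpr (hx0 k))]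
  have hlow : ∀ k, -‖v‖ ≤ ⟪v, t k • x k⟫ := fun k => by
    have := abs_real_inner_le_norm v (t k • x k)
    rw [mem_sphere_zero_iff_norm.mp (hsphere k), mul_one] at this
    exact neg_le_of_abs_le this
  have hup : ∀ k, ⟪v, t k • x k⟫ ≤ a - k * t k := fun k => by
    have hxk : 0 < ‖x k‖ := norm_pos_iff.mpr (hx0 k)
    have : a - k * t k - ⟪v, t k • x k⟫ = t k * (a * ‖x k‖ - k - ⟪v, x k⟫) := by
      simp only [t, real_inner_smul_right]; field_simp
    rw [← sub_nonneg, this]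
    exact mul_nonneg (ht0 k) (by linarith [hxlt k])
  have ht : Tendsto t atTop (𝓝 0) := by
    refine squeeze_zero' (Eventually.of_forall ht0) ((eventually_gt_atTop 0).mono fun k hk => ?_)
      (tendsto_const_div_atTop_nhds_zero_nat (a + ‖v‖))
    rw [le_div_iff₀ (by exact_mod_cast hk)]
    linarith [hup k, hlow k]
  obtain ⟨y, hy, φ, hφ, hlim⟩ := (isCompact_sphere (0 : E) 1).tendsto_subseq hsphere
  have hyC : y ∈ polyhedron ν 0 :=
    mem_polyhedron_zero_of_tendsto_smul (fun k => hxP (φ k)) (fun k => ht0 (φ k))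
      (ht.comp hφ.tendsto_atTop) hlim
  have hvy : ⟪v, y⟫ ≤ a :=
    le_of_tendsto' (tendsto_const_nhds.inner hlim) fun k =>
      (hup (φ k)).trans (sub_le_self a (mul_nonneg (Nat.cast_nonneg _) (ht0 (φ k))))
  have := hv y hyC
  rw [mem_sphere_zero_iff_norm.mp hy, mul_one] at this
  linarith

end Polyhedron

section Integrability

variable {E : Type*} [NormedAddCommGroup E] [NormedSpace ℝ E] [FiniteDimensional ℝ E]
  [MeasurableSpace E] [BorelSpace E] (μ : Measure E) [μ.IsAddHaarMeasure]

theorem integrable_exp_neg_mul_norm {a : ℝ} (ha : 0 < a) :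
    Integrable (fun x : E => exp (-(a * ‖x‖))) μ := by
  have hdecay : (fun x : E => exp (-(a * ‖x‖))) =O[cocompact E]
      fun x => (1 + ‖x‖) ^ (-(Module.finrank ℝ E + 1 : ℝ)) := by
    have hshift : (fun x : E => exp (-(a * ‖x‖))) = fun x => exp a * exp (-a * (1 + ‖x‖)) := by
      ext x; rw [← exp_add]; ring_nf
    have hone : Tendsto (fun x : E => 1 + ‖x‖) (cocompact E) atTop :=
      tendsto_atTop_add_const_left _ _ tendsto_norm_cocompact_atTop
    rw [hshift]
    exact ((isLittleO_exp_neg_mul_rpow_atTop ha _).comp_tendsto hone).isBigO.const_mul_left _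
  refine (Continuous.locallyIntegrable (by fun_prop)).integrable_of_isBigO_cocompact hdecay ?_
  exact (integrable_one_add_norm (by linarith)).integrableAtFilter _

end Integrability

section Domination

variable {E : Type*} [NormedAddCommGroup E] [InnerProductSpace ℝ E] [FiniteDimensional ℝ E]
  [MeasurableSpace E] [BorelSpace E] (μ : Measure E) [μ.IsAddHaarMeasure]

theorem integrableOn_exp_neg_inner_of_mul_norm_sub_le_inner {s : Set E} (hs : MeasurableSet s)
    {v : E} {a M : ℝ} (ha : 0 < a) (hbound : ∀ x ∈ s, a * ‖x‖ - M ≤ ⟪v, x⟫) :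
    IntegrableOn (fun x => exp (-⟪v, x⟫)) s μ := by
  refine ((integrable_exp_neg_mul_norm μ ha).const_mul (exp M)).integrableOn.mono'
    (Continuous.aestronglyMeasurable (by fun_prop)) ((ae_restrict_iff' hs).mpr ?_)
  refine Eventually.of_forall fun x hx => ?_
  rw [norm_of_nonneg (exp_pos _).le, ← exp_add, exp_le_exp]
  linarith [hbound x hx]

end Domination

/-- Let `P = ⋂ᵢ {x : ⟪νᵢ,x⟫ ≥ cᵢ}` be a polyhedron in `ℝⁿ` with asymptotic cone
`C = ⋂ᵢ {x : ⟪νᵢ,x⟫ ≥ 0}`, and let `v` lie in the interior of the dual cone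
`C^∨`. Then `x ↦ e^{−⟪v,x⟫}` is integrable on `P` with respect to Lebesgue measure. -/
theorem stmt_12 (n r : ℕ) (ν : Fin r → EuclideanSpace ℝ (Fin n)) (c : Fin r → ℝ)
    (P C : Set (EuclideanSpace ℝ (Fin n)))
    (hP : P = ⋂ i, {x : EuclideanSpace ℝ (Fin n) | c i ≤ ⟪ν i, x⟫})
    (hC : C = ⋂ i, {x : EuclideanSpace ℝ (Fin n) | 0 ≤ ⟪ν i, x⟫})
    (v : EuclideanSpace ℝ (Fin n))
    (hv : v ∈ interior {y : EuclideanSpace ℝ (Fin n) | ∀ x ∈ C, 0 ≤ ⟪y, x⟫}) :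
    IntegrableOn (fun x : EuclideanSpace ℝ (Fin n) => Real.exp (-⟪v, x⟫)) P volume := by
  change P = polyhedron ν c at hP
  change C = polyhedron ν 0 at hC
  subst hP hC
  obtain ⟨δ, hδ, hcone⟩ := exists_pos_mul_norm_le_inner_of_mem_interior_dual hv
  obtain ⟨M, hM⟩ := exists_mul_norm_sub_le_inner_on_polyhedron c (half_lt_self hδ) hcone
  exact integrableOn_exp_neg_inner_of_mul_norm_sub_le_inner volume
    (isClosed_polyhedron ν c).measurableSet (half_pos hδ) hM
end
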